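/- Let φ: H → (-∞,+∞] be proper and lower semicontinuous on a separable Hilbert space H. Then for every u ∈ H, ξ belongs to the weak limiting subdifferential ∂_ℓ φ(u) if and only if there exist sequences u_k → u strongly, ξ_k ⇀ ξ weakly, with sup_k φ(u_k) < +∞ and ξ_k ∈ ∂_s φ(u_k) for all k; i.e., ∂_ℓ φ is the sequential strong–weak closure of the strong limiting subdifferential ∂_s φ along sequences with bounded energy. -/

import Mathlib

open Filter

/-- The Fréchet subdifferential of `φ` at `v`. -/
def frechetSubdiff {H : Type*} [NormedAddCommGroup H] [InnerProductSpace ℝ H]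
    (φ : H → EReal) (v : H) : Set H :=
  {ξ : H | φ v < ⊤ ∧ ∀ ε : ℝ, 0 < ε → ∀ᶠ w in nhds v,
      φ v + (((inner ℝ ξ (w - v) : ℝ) - ε * ‖w - v‖ : ℝ) : EReal) ≤ φ w}

/-- The strong limiting subdifferential `∂ₛφ(v)`. -/
def strongLimSubdiff {H : Type*} [NormedAddCommGroup H] [InnerProductSpace ℝ H]
    (φ : H → EReal) (v : H) : Set H :=
  {ξ : H | ∃ vn ξn : ℕ → H,
      (∀ n, ξn n ∈ frechetSubdiff φ (vn n)) ∧
      Tendsto vn atTop (nhds v) ∧ Tendsto ξn atTop (nhds ξ) ∧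
      Tendsto (fun n => φ (vn n)) atTop (nhds (φ v))}

/-- The weak limiting subdifferential `∂ₗφ(v)`: sequences `vₙ → v` strongly,
`ξₙ ⇀ ξ` weakly, `ξₙ ∈ ∂φ(vₙ)` (Fréchet), with `sup_n φ(vₙ) < +∞`. -/
def weakLimSubdiff {H : Type*} [NormedAddCommGroup H] [InnerProductSpace ℝ H]
    (φ : H → EReal) (v : H) : Set H :=
  {ξ : H | ∃ vn ξn : ℕ → H,
      (∀ n, ξn n ∈ frechetSubdiff φ (vn n)) ∧
      Tendsto vn atTop (nhds v) ∧
      (∀ y : H, Tendsto (fun n => (inner ℝ (ξn n) y : ℝ)) atTop (nhds (inner ℝ ξ y))) ∧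
      ∃ C : ℝ, ∀ n, φ (vn n) ≤ (C : EReal)}

/-! Every Fréchet subgradient is a strong limiting one, which gives one inclusion. Conversely,
each `ξₖ ∈ ∂ₛφ(uₖ)` is approximated within `1/(k+1)`, in the point and in the subgradient, by a
Fréchet subgradient at a point of energy below `C + 1`. The diagonal sequence converges strongly
in the points and weakly in the subgradients, since a strongly null perturbation does not change
weak limits. -/

section

variable {H : Type*} [NormedAddCommGroup H] [InnerProductSpace ℝ H]

theorem frechetSubdiff_subset_strongLimSubdiff (φ : H → EReal) (v : H) :
    frechetSubdiff φ v ⊆ strongLimSubdiff φ v := fun _ hξ =>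
  ⟨fun _ => v, fun _ => _, fun _ => hξ, tendsto_const_nhds, tendsto_const_nhds,
    tendsto_const_nhds⟩

theorem exists_mem_frechetSubdiff_near_of_mem_strongLimSubdiff {φ : H → EReal} {u ξ : H}
    (hξ : ξ ∈ strongLimSubdiff φ u) {ε : ℝ} (hε : 0 < ε) {c : EReal} (hc : φ u < c) :
    ∃ v η, η ∈ frechetSubdiff φ v ∧ dist v u < ε ∧ dist η ξ < ε ∧ φ v < c := by
  obtain ⟨vn, ξn, hF, hv, hξn, hφ⟩ := hξ
  obtain ⟨n, hvn, hξn, hφn⟩ := ((Metric.tendsto_nhds.1 hv ε hε).and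
    ((Metric.tendsto_nhds.1 hξn ε hε).and (hφ.eventually_lt_const hc))).exists
  exact ⟨vn n, ξn n, hF n, hvn, hξn, hφn⟩

theorem tendsto_inner_of_tendsto_dist {ι : Type*} {l : Filter ι} {a b : ι → H} {ξ : H}
    (ha : ∀ y, Tendsto (fun i => inner ℝ (a i) y) l (nhds (inner ℝ ξ y)))
    (hab : Tendsto (fun i => dist (b i) (a i)) l (nhds 0)) (y : H) :
    Tendsto (fun i => inner ℝ (b i) y) l (nhds (inner ℝ ξ y)) := by
  have hsub : Tendsto (fun i => b i - a i) l (nhds 0) := by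
    rw [tendsto_iff_norm_sub_tendsto_zero]
    simpa only [sub_zero, ← dist_eq_norm] using hab
  simpa only [inner_sub_left, inner_zero_left, add_zero, add_sub_cancel] using
    (ha y).add (hsub.inner (tendsto_const_nhds (x := y)))

end

theorem weakLimSubdiff_eq_closure_strongLimSubdiff_general {H : Type*}
    [NormedAddCommGroup H] [InnerProductSpace ℝ H]
    (φ : H → EReal) :
    ∀ (u ξ : H), ξ ∈ weakLimSubdiff φ u ↔
      ∃ uk ξk : ℕ → H,
        (∀ k, ξk k ∈ strongLimSubdiff φ (uk k)) ∧
        Tendsto uk atTop (nhds u) ∧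
        (∀ y : H, Tendsto (fun k => (inner ℝ (ξk k) y : ℝ)) atTop (nhds (inner ℝ ξ y))) ∧
        ∃ C : ℝ, ∀ k, φ (uk k) ≤ (C : EReal) := by
  intro u ξ
  constructor
  · rintro ⟨vn, ξn, hF, hv, hw, C, hC⟩
    exact ⟨vn, ξn, fun n => frechetSubdiff_subset_strongLimSubdiff φ _ (hF n), hv, hw, C, hC⟩
  · rintro ⟨uk, ξk, hS, hu, hw, C, hC⟩
    have hlt : ∀ k, φ (uk k) < ((C + 1 : ℝ) : EReal) := fun k =>
      (hC k).trans_lt (EReal.coe_lt_coe_iff.2 (lt_add_one C))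
    choose v η hF hv hη hφ using fun k =>
      exists_mem_frechetSubdiff_near_of_mem_strongLimSubdiff (hS k) Nat.one_div_pos_of_nat
        (hlt k)
    have hnull : ∀ {x y : ℕ → H}, (∀ k, dist (x k) (y k) < 1 / (k + 1)) →
        Tendsto (fun k => dist (x k) (y k)) atTop (nhds 0) := fun h =>
      squeeze_zero (fun _ => dist_nonneg) (fun k => (h k).le)
        tendsto_one_div_add_atTop_nhds_zero_nat
    exact ⟨v, η, hF, hu.congr_dist (by simpa only [dist_comm] using hnull hv),
      tendsto_inner_of_tendsto_dist hw (hnull hη), C + 1, fun k => (hφ k).le⟩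

/-- The weak limiting subdifferential is the sequential strong–weak closure of
the strong limiting subdifferential along sequences with bounded energy. -/
theorem weakLimSubdiff_eq_closure_strongLimSubdiff {H : Type*}
    [NormedAddCommGroup H] [InnerProductSpace ℝ H]
    [TopologicalSpace.SeparableSpace H]
    (φ : H → EReal) (hproper : ∃ w, φ w ≠ ⊤) (hnbot : ∀ w, φ w ≠ ⊥)
    (hlsc : LowerSemicontinuous φ) :
    ∀ (u ξ : H), ξ ∈ weakLimSubdiff φ u ↔
      ∃ uk ξk : ℕ → H,
        (∀ k, ξk k ∈ strongLimSubdiff φ (uk k)) ∧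
        Tendsto uk atTop (nhds u) ∧
        (∀ y : H, Tendsto (fun k => (inner ℝ (ξk k) y : ℝ)) atTop (nhds (inner ℝ ξ y))) ∧
        ∃ C : ℝ, ∀ k, φ (uk k) ≤ (C : EReal) :=
  weakLimSubdiff_eq_closure_strongLimSubdiff_general φ
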